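/- arXiv:0909.2016 — 2 statements merged into one kernel-verified Lean document; each statement's English description precedes it below -/
import Mathlib

section
/- Let c > 0 be a real number and n ∈ ℕ. Define F : ℂ → ℂ by F(s) = Σ_{m=1}^{n} exp(−iπ s) · exp(−s · log(c m)) + ζ(s) · exp(−s · log c), where ζ is the Riemann zeta function (the analytic continuation of Σ_{m≥1} (c m)^{−s} being ζ(s) c^{−s}). Then F is complex-differentiable at s = 0 and −F'(0) = (n − 1/2) · log c + log(n!) + (1/2) · log(2π) + iπ n. Consequently the zeta-regularized product [∏_{m ∈ ℤ_{≥0}, m ≠ n} c (m − n)] := exp(−F'(0)) equals (−1)^n c^n n! √(2π/c), i.e. its reciprocal is (−1)^n c^{−n} (n!)^{−1} √(c/(2π)). (Lemma 3.2 with c = aħ/2π.) -/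
open Complex

/-!
Near `s = 0` each finite term `e^{-iπs} (cm)^{-s}` has derivative `-(iπ + log (cm))`, and these
sum to `-(iπn + n log c + log n!)`. The tail `ζ(s) c^{-s}` has derivative
`ζ'(0) - ζ(0) log c = -½ log 2π + ½ log c`.
Exponentiating, `e^{iπn} = (-1)^n` and the real part gives `c^n n! √(2π/c)`.
-/

lemma hasDerivAt_riemannZeta_zero :
    HasDerivAt riemannZeta (-(Real.log (2 * Real.pi) : ℂ) / 2) 0 := by
  have h := (differentiableAt_riemannZeta zero_ne_one).hasDerivAt
  rwa [deriv_riemannZeta_zero, ← ofReal_ofNat, ← ofReal_mul,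
    ← ofReal_log (by positivity)] at h

lemma hasDerivAt_cexp_neg_mul_zero (a : ℂ) :
    HasDerivAt (fun s : ℂ => cexp (-s * a)) (-a) 0 := by
  simpa using ((hasDerivAt_id (0 : ℂ)).neg.mul_const a).cexp

lemma Real.sum_log_mul_natCast_Icc {c : ℝ} (hc : c ≠ 0) (n : ℕ) :
    ∑ m ∈ Finset.Icc 1 n, Real.log (c * m) = n * Real.log c + Real.log n.factorial := by
  have hm : ∀ m ∈ Finset.Icc 1 n, c * m ≠ 0 := fun m hm =>
    mul_ne_zero hc (Nat.cast_ne_zero.2 (by grind))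
  have hprod : ∏ m ∈ Finset.Icc 1 n, c * m = c ^ n * n.factorial := by
    rw [Finset.prod_mul_distrib, Finset.prod_const, Nat.card_Icc, Nat.add_sub_cancel,
      ← Nat.cast_prod, ← Finset.Ico_add_one_right_eq_Icc, Finset.prod_Ico_id_eq_factorial]
  rw [← Real.log_prod hm, hprod, Real.log_mul (pow_ne_zero n hc)
    (Nat.cast_ne_zero.2 n.factorial_ne_zero), Real.log_pow]

/-- The function `s ↦ Σ_{m ∈ ℤ≥0, m ≠ n} (c (m - n))^{-s}`, with `(-cm)^{-s} = e^{-iπs} (cm)^{-s}`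
for `m < n` and the tail written as `ζ(s) c^{-s}`. -/
noncomputable def shiftedLatticeZeta (c : ℝ) (n : ℕ) (s : ℂ) : ℂ :=
  (∑ m ∈ Finset.Icc 1 n, cexp (-(Real.pi : ℂ) * I * s) * cexp (-s * Real.log (c * m))) +
    riemannZeta s * cexp (-s * Real.log c)

lemma hasDerivAt_shiftedLatticeZeta_zero {c : ℝ} (hc : c ≠ 0) (n : ℕ) :
    HasDerivAt (shiftedLatticeZeta c n)
      (-(((n : ℂ) - 1 / 2) * Real.log c + Real.log n.factorial +
        (1 / 2 : ℂ) * Real.log (2 * Real.pi) + Real.pi * I * n)) 0 := by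
  have hphase : HasDerivAt (fun s : ℂ => cexp (-(Real.pi : ℂ) * I * s)) (-Real.pi * I) 0 := by
    simpa using ((hasDerivAt_id (0 : ℂ)).const_mul (-(Real.pi : ℂ) * I)).cexp
  have hsum := HasDerivAt.fun_sum fun m (_ : m ∈ Finset.Icc 1 n) =>
    hphase.mul (hasDerivAt_cexp_neg_mul_zero (Real.log (c * m)))
  have hzeta := hasDerivAt_riemannZeta_zero.mul (hasDerivAt_cexp_neg_mul_zero (Real.log c))
  have hlog : ∑ m ∈ Finset.Icc 1 n, (Real.log (c * m) : ℂ) =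
      n * Real.log c + Real.log n.factorial := by
    exact_mod_cast congrArg ofReal (Real.sum_log_mul_natCast_Icc hc n)
  refine (hsum.add hzeta).congr_deriv ?_
  simp only [neg_zero, zero_mul, mul_zero, Complex.exp_zero, one_mul, mul_one, riemannZeta_zero]
  rw [Finset.sum_add_distrib, Finset.sum_neg_distrib, hlog, Finset.sum_const, Nat.card_Icc,
    Nat.add_sub_cancel, nsmul_eq_mul]
  ring

lemma Real.exp_nat_sub_half_mul_log_add_log_factorial {c : ℝ} (hc : 0 < c) (n : ℕ) :
    Real.exp ((n - 1 / 2) * Real.log c + Real.log n.factorial + 1 / 2 * Real.log (2 * Real.pi)) =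
      c ^ n * n.factorial * Real.sqrt (2 * Real.pi / c) := by
  rw [Real.sqrt_eq_rpow, Real.div_rpow (by positivity) hc.le, Real.rpow_def_of_pos (by positivity),
    Real.rpow_def_of_pos hc]
  have hsplit : (n - 1 / 2) * Real.log c + Real.log n.factorial + 1 / 2 * Real.log (2 * Real.pi) =
      Real.log c * n + Real.log n.factorial +
        (Real.log (2 * Real.pi) * (1 / 2) - Real.log c * (1 / 2)) := by ring
  rw [hsplit, Real.exp_add, Real.exp_add, Real.exp_sub, ← Real.rpow_def_of_pos hc,
    Real.rpow_natCast, Real.exp_log (by positivity)]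

/-- Lemma 3.2 (with `c = a hbar/2π`): the zeta-regularized product
`[∏_{m ∈ ℤ_{≥0}, m ≠ n} c(m−n)] = exp(−F'(0))` where
`F(s) = Σ_{m=1}^n e^{−iπs} e^{−s log(cm)} + ζ(s) e^{−s log c}`;
one has `−F'(0) = (n − 1/2) log c + log n! + (1/2) log 2π + iπn`,
so the regularized product equals `(−1)^n c^n n! √(2π/c)`. -/
theorem zeta_regularized_product (c : ℝ) (hc : 0 < c) (n : ℕ) (F : ℂ → ℂ)
    (hF : ∀ s : ℂ, F s =
      (∑ m ∈ Finset.Icc 1 n,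
          Complex.exp (-(Real.pi : ℂ) * Complex.I * s) *
            Complex.exp (-s * Real.log (c * m))) +
        riemannZeta s * Complex.exp (-s * Real.log c)) :
    DifferentiableAt ℂ F 0 ∧
    -deriv F 0 = ((n : ℂ) - 1 / 2) * Real.log c + Real.log (Nat.factorial n) +
        (1 / 2 : ℂ) * Real.log (2 * Real.pi) + Real.pi * Complex.I * n ∧
    Complex.exp (-deriv F 0)
      = (-1) ^ n * (c : ℂ) ^ n * (Nat.factorial n : ℂ) * Real.sqrt (2 * Real.pi / c) := by
  obtain rfl : F = shiftedLatticeZeta c n := funext hF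
  have hderiv := hasDerivAt_shiftedLatticeZeta_zero hc.ne' n
  have hvalue := neg_eq_iff_eq_neg.2 hderiv.deriv
  refine ⟨hderiv.differentiableAt, hvalue, ?_⟩
  have hsplit : ((n : ℂ) - 1 / 2) * Real.log c + Real.log n.factorial +
        (1 / 2 : ℂ) * Real.log (2 * Real.pi) + Real.pi * I * n =
      ((((n : ℝ) - 1 / 2) * Real.log c + Real.log n.factorial +
        1 / 2 * Real.log (2 * Real.pi) : ℝ) : ℂ) + n * (Real.pi * I) := by
    push_cast
    ring
  rw [hvalue, hsplit, Complex.exp_add, Complex.exp_nat_mul, Complex.exp_pi_mul_I,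
    ← ofReal_exp, Real.exp_nat_sub_half_mul_log_add_log_factorial hc n]
  push_cast
  ring
end

section
/- Let μ > 0 and ħ > 0 be real numbers and λ ∈ ℂ with Re(λ) > 0. Then lim_{a → +∞} (a/ħ)^{−1/2} · (a/(2π))^{−λ/ħ} · μ √(aħ) ∫_0^∞ e^{μ λ t} exp( −(2π/(aħ)) e^{μ ħ t} ) dt = ħ^{λ/ħ} Γ(λ/ħ), the limit being taken along real a → +∞. (This is eq. (3.36): removing the renormalization ambiguity recovers the Gamma-function value of the regularized S¹ × U(1)-equivariant volume.) -/
open MeasureTheory Complex Filter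

/-!
Substituting `u = c e^{μħt}` with `c = 2π/(aħ)` turns the integral into
`(μħ)⁻¹ c^{-λ/ħ} Γ(λ/ħ, c)`, an upper incomplete Gamma function. The prefactors are chosen so
that all dependence on `a` other than through the lower limit `c` cancels, leaving
`ħ^{λ/ħ} Γ(λ/ħ, c)`; as `a → ∞` the lower limit `c` tends to `0⁺` and `Γ(λ/ħ, c) → Γ(λ/ħ)`.
-/

open Set Topology

theorem tendsto_setIntegral_Ioi_nhdsGT {E : Type*} [NormedAddCommGroup E] [NormedSpace ℝ E]
    {f : ℝ → E} {a : ℝ} (hf : IntegrableOn f (Ioi a)) :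
    Tendsto (fun c => ∫ x in Ioi c, f x) (𝓝[>] a) (𝓝 (∫ x in Ioi a, f x)) := by
  have hprimitive : Tendsto (fun c => ∫ x in a..c, f x) (𝓝[>] a) (𝓝 0) := by
    have hint : IntervalIntegrable f volume (min a a) (max a (a + 1)) := by
      rw [min_self, max_eq_right (by linarith),
        intervalIntegrable_iff_integrableOn_Ioc_of_le (by linarith)]
      exact hf.mono_set Ioc_subset_Ioi_self
    simpa using ((intervalIntegral.continuousWithinAt_primitive (measure_singleton a) hint)
      |>.mono_of_mem_nhdsWithin (Icc_mem_nhdsGT (lt_add_one a))).tendsto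
  have hsplit : ∀ᶠ c in 𝓝[>] a,
      (∫ x in Ioi a, f x) - ∫ x in a..c, f x = ∫ x in Ioi c, f x := by
    filter_upwards [self_mem_nhdsWithin] with c hc
    rw [← intervalIntegral.integral_Ioi_sub_Ioi hf (le_of_lt hc), sub_sub_cancel]
  simpa using (tendsto_const_nhds.sub hprimitive).congr' hsplit

noncomputable def upperIncompleteGamma (s : ℂ) (c : ℝ) : ℂ :=
  ∫ u in Ioi c, (Real.exp (-u) : ℂ) * (u : ℂ) ^ (s - 1)

theorem tendsto_upperIncompleteGamma_nhdsGT_zero {s : ℂ} (hs : 0 < s.re) :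
    Tendsto (upperIncompleteGamma s) (𝓝[>] 0) (𝓝 (Gamma s)) := by
  rw [Gamma_eq_integral hs]
  exact tendsto_setIntegral_Ioi_nhdsGT (GammaIntegral_convergent hs)

theorem Complex.ofReal_cpow_eq_exp_log_mul {x : ℝ} (hx : 0 < x) (w : ℂ) :
    (x : ℂ) ^ w = cexp (Real.log x * w) := by
  rw [cpow_def_of_ne_zero (ofReal_ne_zero.mpr hx.ne'), ofReal_log hx.le]

theorem integral_Ioi_cexp_mul_cexp_neg_exp {k c : ℝ} (hk : 0 < k) (hc : 0 < c) (s : ℂ) :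
    ∫ t in Ioi (0 : ℝ), cexp (k * s * t) * cexp (-((c * Real.exp (k * t) : ℝ) : ℂ)) =
      (k : ℂ)⁻¹ * cexp (-(s * Real.log c)) * upperIncompleteGamma s c := by
  set φ : ℝ → ℝ := fun t => c * Real.exp (k * t)
  have hφ_image : φ '' Ioi 0 = Ioi c := by
    change ((c * ·) ∘ Real.exp ∘ (k * ·)) '' Ioi 0 = Ioi c
    rw [image_comp, image_comp, image_mul_left_Ioi hk, mul_zero, Real.image_exp_Ioi,
      Real.exp_zero, image_mul_left_Ioi hc, mul_one]
  have hφ_mono : StrictMono φ := (strictMono_mul_left_of_pos hc).comp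
    (Real.exp_strictMono.comp (strictMono_mul_left_of_pos hk))
  have hφ_deriv : ∀ t, HasDerivAt φ (k * φ t) t := fun t => by
    refine (((Real.hasDerivAt_exp (k * t)).comp t
      ((hasDerivAt_id t).const_mul k)).const_mul c).congr_deriv ?_
    simp only [φ]
    ring
  rw [upperIncompleteGamma, ← hφ_image, integral_image_eq_integral_abs_deriv_smul
    measurableSet_Ioi (fun t _ => (hφ_deriv t).hasDerivWithinAt) hφ_mono.injective.injOn,
    ← integral_const_mul]
  refine setIntegral_congr_fun measurableSet_Ioi fun t _ => ?_
  have hφ_pos : 0 < φ t := by positivity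
  have hφ_log : Real.log (φ t) = Real.log c + k * t := by
    rw [Real.log_mul hc.ne' (Real.exp_pos _).ne', Real.log_exp]
  have hφ_cexp : (φ t : ℂ) = cexp (Real.log (φ t)) := by
    rw [← ofReal_exp, Real.exp_log hφ_pos]
  have hexponent : cexp (k * s * t) =
      cexp (-(s * Real.log c)) * cexp (Real.log (φ t)) * cexp (Real.log (φ t) * (s - 1)) := by
    rw [← exp_add, ← exp_add, hφ_log]
    push_cast
    ring_nf
  have hk' : (k : ℂ) ≠ 0 := ofReal_ne_zero.mpr hk.ne'
  rw [abs_of_pos (mul_pos hk hφ_pos), real_smul, ofReal_cpow_eq_exp_log_mul hφ_pos,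
    ← ofReal_neg, ← ofReal_exp, hexponent, ofReal_mul, hφ_cexp]
  field_simp
  rfl

theorem Real.exp_neg_half_log_div_mul_sqrt_mul {a b : ℝ} (ha : 0 < a) (hb : 0 < b) :
    Real.exp (-(1 / 2) * Real.log (a / b)) * Real.sqrt (a * b) = b := by
  rw [Real.sqrt_eq_rpow, Real.rpow_def_of_pos (mul_pos ha hb), ← Real.exp_add,
    Real.log_div ha.ne' hb.ne', Real.log_mul ha.ne' hb.ne']
  ring_nf
  exact Real.exp_log hb

noncomputable def renormalizedVolume (μ hbar : ℝ) (lam : ℂ) (a : ℝ) : ℂ :=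
  (Real.exp (-(1 / 2) * Real.log (a / hbar)) : ℂ) *
    Complex.exp (-(lam / hbar) * Real.log (a / (2 * Real.pi))) *
    ((μ : ℂ) * Real.sqrt (a * hbar)) *
    ∫ t in Set.Ioi (0 : ℝ),
      Complex.exp (μ * lam * t) *
        Complex.exp (-(((2 * Real.pi / (a * hbar)) * Real.exp (μ * hbar * t) : ℝ) : ℂ))

theorem renormalizedVolume_eq {μ hbar a : ℝ} (hμ : 0 < μ) (hh : 0 < hbar) (ha : 0 < a)
    (lam : ℂ) :
    renormalizedVolume μ hbar lam a = cexp (lam / hbar * Real.log hbar) *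
      upperIncompleteGamma (lam / hbar) (2 * Real.pi / (a * hbar)) := by
  have hh' : (hbar : ℂ) ≠ 0 := ofReal_ne_zero.mpr hh.ne'
  have hμ' : (μ : ℂ) ≠ 0 := ofReal_ne_zero.mpr hμ.ne'
  have hrate : (μ : ℂ) * lam = ((μ * hbar : ℝ) : ℂ) * (lam / hbar) := by
    push_cast
    field_simp
  have hprefactor : (Real.exp (-(1 / 2) * Real.log (a / hbar)) : ℂ) * Real.sqrt (a * hbar) =
      hbar := by exact_mod_cast Real.exp_neg_half_log_div_mul_sqrt_mul ha hh
  have hlog : Real.log (a / (2 * Real.pi)) + Real.log (2 * Real.pi / (a * hbar)) =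
      -Real.log hbar := by
    rw [← Real.log_mul (by positivity) (by positivity), ← Real.log_inv]
    congr 1
    field_simp
  have hexp : cexp (-(lam / hbar) * Real.log (a / (2 * Real.pi))) *
      cexp (-(lam / hbar * Real.log (2 * Real.pi / (a * hbar)))) =
      cexp (lam / hbar * Real.log hbar) := by
    rw [← exp_add]
    congr 1
    have hlog' : (Real.log (a / (2 * Real.pi)) : ℂ) + Real.log (2 * Real.pi / (a * hbar)) =
        -Real.log hbar := by exact_mod_cast hlog
    linear_combination (-(lam / hbar)) * hlog'
  rw [renormalizedVolume, hrate,
    integral_Ioi_cexp_mul_cexp_neg_exp (mul_pos hμ hh) (by positivity), ← hexp]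
  set E : ℂ := (Real.exp (-(1 / 2) * Real.log (a / hbar)) : ℂ)
  calc _ = E * Real.sqrt (a * hbar) * μ * ((μ * hbar : ℝ) : ℂ)⁻¹ *
      cexp (-(lam / hbar) * Real.log (a / (2 * Real.pi))) *
      cexp (-(lam / hbar * Real.log (2 * Real.pi / (a * hbar)))) *
      upperIncompleteGamma (lam / hbar) (2 * Real.pi / (a * hbar)) := by ring
    _ = _ := by
      rw [hprefactor]
      push_cast
      field_simp

/-- Eq. (3.36): removing the renormalization ambiguity recovers the Gamma function:
`lim_{a→+∞} (a/hbar)^{−1/2} (a/2π)^{−λ/hbar} μ √(a hbar)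
   ∫_0^∞ e^{μλt} e^{−(2π/(a hbar)) e^{μ hbar t}} dt = hbar^{λ/hbar} Γ(λ/hbar)`. -/
theorem regularized_volume_limit (μ hbar : ℝ) (hμ : 0 < μ) (hh : 0 < hbar)
    (lam : ℂ) (hlam : 0 < lam.re) :
    Tendsto (fun a : ℝ =>
        (Real.exp (-(1 / 2) * Real.log (a / hbar)) : ℂ) *
          Complex.exp (-(lam / hbar) * Real.log (a / (2 * Real.pi))) *
          ((μ : ℂ) * Real.sqrt (a * hbar)) *
          ∫ t in Set.Ioi (0 : ℝ),
            Complex.exp (μ * lam * t) *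
              Complex.exp (-(((2 * Real.pi / (a * hbar)) * Real.exp (μ * hbar * t) : ℝ) : ℂ)))
      atTop
      (nhds (Complex.exp ((lam / hbar) * Real.log hbar) * Complex.Gamma (lam / hbar))) := by
  have hs : 0 < (lam / hbar).re := by
    rw [div_ofReal_re]
    exact div_pos hlam hh
  have hcutoff : Tendsto (fun a : ℝ => 2 * Real.pi / (a * hbar)) atTop (𝓝[>] 0) := by
    refine tendsto_nhdsWithin_iff.mpr ⟨?_, ?_⟩
    · exact tendsto_const_nhds.div_atTop (tendsto_id.atTop_mul_const hh)
    · filter_upwards [eventually_gt_atTop 0] with a ha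
      exact div_pos Real.two_pi_pos (mul_pos ha hh)
  refine (((tendsto_upperIncompleteGamma_nhdsGT_zero hs).comp hcutoff).const_mul _).congr' ?_
  filter_upwards [eventually_gt_atTop 0] with a ha
  exact (renormalizedVolume_eq hμ hh ha lam).symm
end
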